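/- Let k ≥ 2 and ℓ = 2. Assign to each vertex v of ST^2_k the color c(v) = the unique position i ≠ 0 with v i = v 0, and to each edge {v, v ∘ (Equiv.swap 0 h)} (with v h ≠ v 0) the color h. Then this is a proper total coloring of ST^2_k with color set the positions i ∈ Fin (2k), i ≠ 0: adjacent vertices receive distinct colors, edges sharing an endpoint receive distinct colors, and every edge's color is distinct from the colors of both of its endpoints. -/
import Mathlib


/-- An ℓ-set permutation: a string of length `k * l` over the alphabet `Fin k`
in which every symbol occurs exactly `l` times. -/
abbrev LSetPerm (k l : ℕ) : Type :=
  {v : Fin (k * l) → Fin k // ∀ j : Fin k, (Finset.univ.filter fun x => v x = j).card = l}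

/-- The star ℓ-set transposition graph `ST^ℓ_k`: vertices are the ℓ-set permutations,
with `v` adjacent to `w` iff `w` is obtained from `v` by transposing the first entry
with an entry of differing value. -/
def STGraph (k l : ℕ) [NeZero (k * l)] : SimpleGraph (LSetPerm k l) :=
  SimpleGraph.fromRel fun v w =>
    ∃ h : Fin (k * l), h ≠ 0 ∧ v.1 h ≠ v.1 0 ∧ w.1 = v.1 ∘ (Equiv.swap 0 h)

/-- for `ℓ = 2`, coloring each vertex `v` by the unique position `i ≠ 0`
with `v i = v 0`, and each edge `{v, v ∘ swap 0 h}` (with `v h ≠ v 0`) by `h`, gives a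
proper total coloring of `ST^2_k` with color set the nonzero positions: adjacent
vertices get distinct colors, edges sharing an endpoint get distinct colors, and each
edge's color differs from the colors of both of its endpoints. -/
theorem ST_total_coloring (k : ℕ) (hk : 2 ≤ k) :
    letI : NeZero (k * 2) := ⟨Nat.mul_ne_zero (by omega) (by omega)⟩
    ∀ c : LSetPerm k 2 → Fin (k * 2),
      (∀ v : LSetPerm k 2, c v ≠ 0 ∧ v.1 (c v) = v.1 0) →
      (∀ v w : LSetPerm k 2, (STGraph k 2).Adj v w → c v ≠ c w) ∧
      (∀ v w : LSetPerm k 2, ∀ h : Fin (k * 2), h ≠ 0 → v.1 h ≠ v.1 0 →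
        w.1 = v.1 ∘ Equiv.swap 0 h → h ≠ c v ∧ h ≠ c w) ∧
      (∀ v w u : LSetPerm k 2, ∀ h h' : Fin (k * 2), h ≠ 0 → h' ≠ 0 →
        v.1 h ≠ v.1 0 → v.1 h' ≠ v.1 0 →
        w.1 = v.1 ∘ Equiv.swap 0 h → u.1 = v.1 ∘ Equiv.swap 0 h' → w ≠ u → h ≠ h') := by
  intro c hc
  haveI : NeZero (k * 2) := ⟨by omega⟩
  have key : ∀ v w : LSetPerm k 2, ∀ h : Fin (k * 2), h ≠ 0 → v.1 h ≠ v.1 0 →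
      w.1 = v.1 ∘ Equiv.swap 0 h → c v ≠ c w := by
    intro v w h h0 hne hw heq
    have hcw0 := (hc w).1
    have hcww := (hc w).2
    have hv := (hc v).2
    rw [heq] at hv
    have hch : c w ≠ h := fun hh => hne (hh ▸ hv)
    have h1 : w.1 (c w) = v.1 (c w) := by
      rw [hw]; simp [Equiv.swap_apply_of_ne_of_ne hcw0 hch]
    have h2 : w.1 0 = v.1 h := by rw [hw]; simp
    exact hne (h2.symm.trans (hcww.symm.trans (h1.trans hv)))
  refine ⟨?_, ?_, ?_⟩
  · intro v w hadj
    rcases hadj with ⟨hvw, ⟨h, h0, hne, hw⟩ | ⟨h, h0, hne, hw⟩⟩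
    · exact key v w h h0 hne hw
    · exact (key w v h h0 hne hw).symm
  · intro v w h h0 hne hw
    constructor
    · intro hh
      exact hne (hh ▸ (hc v).2)
    · intro hh
      have hcww := (hc w).2
      rw [← hh, hw] at hcww
      simp at hcww
      exact hne hcww.symm
  · intro v w u h h' h0 h0' hne hne' hw hu hwu hh
    exact hwu (Subtype.ext (hw.trans (hh ▸ hu.symm)))
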